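/- Let α, β > −1 be real numbers with α + β > −1. Then for every n ∈ ℕ₀ and every x ∈ ℝ, ((1+x)/2)^n = Σ_{k=0}^{n} φ_k^{(α,β)}(n) P_k^{(α,β)}(x), where φ_k^{(α,β)}(n) = Γ(n+β+1) n! (2k+α+β+1) Γ(k+α+β+1) / ( Γ(k+n+α+β+2) Γ(k+β+1) (n−k)! ), and every coefficient φ_k^{(α,β)}(n) is positive. -/

import Mathlib

/-!
With `y = (x - 1) / 2` we have `(1 + x) / 2 = 1 + y`, so the expansion amounts to the identity
`∑_{k=j}^{n} φ_k(n) c_{k,j} = C(n, j)` for every `j ≤ n`, where `c_{k,j}` is the coefficient of `y^j`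
in `P_k`. Written with Gamma functions, the summand `F(n, k) = φ_k(n) c_{k,j}` is hypergeometric in
both `n` and `k`, and it forms a Wilf–Zeilberger pair with an explicit rational multiple
`G(n, k)` of `F(n + 1, k)`:
`(n + 1 - j) / (n + 1) · F(n + 1, k) = F(n, k) + G(n, k + 1) - G(n, k)`.
Summing over `k` telescopes, which gives the identity by induction on `n`. Positivity of `φ_k(n)` is
immediate, since every Gamma argument in it is positive.
-/

open Filter

/-- Jacobi polynomial `P_n^{(α,β)}(x)`. -/
noncomputable def jacobiP (α β : ℝ) (n : ℕ) (x : ℝ) : ℝ :=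
  (1 / (n.factorial : ℝ)) * ∑ k ∈ Finset.range (n + 1),
    (n.choose k : ℝ) * (∏ i ∈ Finset.Icc (k + 1) n, (α + (i : ℝ))) *
      (∏ j ∈ Finset.Icc 1 k, (α + β + (n : ℝ) + (j : ℝ))) * ((x - 1) / 2) ^ k

/-- The coefficient φ_k^{(α,β)}(n) of Askey'"'"'s expansion. -/
noncomputable def phiCoef (α β : ℝ) (n k : ℕ) : ℝ :=
  Real.Gamma ((n : ℝ) + β + 1) * (n.factorial : ℝ) * (2 * (k : ℝ) + α + β + 1) *
      Real.Gamma ((k : ℝ) + α + β + 1) /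
    (Real.Gamma ((k : ℝ) + (n : ℝ) + α + β + 2) * Real.Gamma ((k : ℝ) + β + 1) *
      ((n - k).factorial : ℝ))

open Finset Nat Real

theorem Real.Gamma_mul_prod_Icc {c : ℝ} {a b : ℕ} (hc : 0 < c + a + 1) (hab : a ≤ b) :
    Gamma (c + a + 1) * ∏ i ∈ Icc (a + 1) b, (c + i) = Gamma (c + b + 1) := by
  induction b, hab using Nat.le_induction with
  | base => simp
  | succ b hab ih =>
    have hb : c + b + 1 ≠ 0 := by
      have : (a : ℝ) ≤ b := mod_cast hab
      linarith
    rw [prod_Icc_succ_top (by omega), ← mul_assoc, ih,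
      show c + ((b + 1 : ℕ) : ℝ) + 1 = c + b + 1 + 1 by push_cast; ring, Gamma_add_one hb]
    push_cast
    ring

theorem mul_sum_Icc_succ_of_telescoping {R : Type*} [CommRing R] {f g h : ℕ → R} {c : R}
    {j n : ℕ} (hjn : j ≤ n) (hstep : ∀ k ∈ Icc j n, c * f k = g k + (h (k + 1) - h k))
    (htop : c * f (n + 1) = -h (n + 1)) (hbot : h j = 0) :
    c * ∑ k ∈ Icc j (n + 1), f k = ∑ k ∈ Icc j n, g k := by
  rw [sum_Icc_succ_top (by omega), mul_add, mul_sum, sum_congr rfl hstep, sum_add_distrib,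
    sum_Icc_sub hjn, htop, hbot]
  ring

noncomputable def jacobiCoeff (α β : ℝ) (k j : ℕ) : ℝ :=
  k.choose j * (∏ i ∈ Icc (j + 1) k, (α + (i : ℝ))) *
    (∏ i ∈ Icc 1 j, (α + β + (k : ℝ) + (i : ℝ))) / k !

theorem jacobiP_eq_sum_jacobiCoeff (α β : ℝ) (k : ℕ) (x : ℝ) :
    jacobiP α β k x = ∑ j ∈ range (k + 1), jacobiCoeff α β k j * ((x - 1) / 2) ^ j := by
  rw [jacobiP, mul_sum]
  refine sum_congr rfl fun j _ => ?_
  rw [jacobiCoeff]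
  ring

section

variable {α β : ℝ}

theorem jacobiCoeff_eq_Gamma (hα : -1 < α) (hαβ : -1 < α + β) {j k : ℕ} (hjk : j ≤ k) :
    jacobiCoeff α β k j = Gamma (α + k + 1) * Gamma (α + β + k + j + 1) /
      (Gamma (α + j + 1) * Gamma (α + β + k + 1) * j ! * (k - j)!) := by
  have hj : 0 < α + j + 1 := by have := j.cast_nonneg (α := ℝ); linarith
  have hk : 0 < α + β + k + 1 := by have := k.cast_nonneg (α := ℝ); linarith
  have hprod₁ := Gamma_mul_prod_Icc hj hjk
  have hprod₂ := Gamma_mul_prod_Icc (a := 0) (b := j) (by simpa using hk) j.zero_le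
  simp only [CharP.cast_eq_zero, add_zero, zero_add] at hprod₂
  rw [jacobiCoeff, cast_choose ℝ hjk, ← hprod₁, ← hprod₂]
  have := (Gamma_pos_of_pos hj).ne'
  have := (Gamma_pos_of_pos hk).ne'
  field_simp

theorem phiCoef_pos (hβ : -1 < β) (hαβ : -1 < α + β) (n k : ℕ) : 0 < phiCoef α β n k := by
  have := n.cast_nonneg (α := ℝ)
  have := k.cast_nonneg (α := ℝ)
  unfold phiCoef
  have := n.factorial_pos
  have := (n - k).factorial_pos
  have := Gamma_pos_of_pos (s := n + β + 1) (by linarith)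
  have := Gamma_pos_of_pos (s := k + α + β + 1) (by linarith)
  have := Gamma_pos_of_pos (s := k + n + α + β + 2) (by linarith)
  have := Gamma_pos_of_pos (s := k + β + 1) (by linarith)
  have : 0 < 2 * (k : ℝ) + α + β + 1 := by linarith
  positivity

theorem phiCoef_succ_left (hβ : -1 < β) (hαβ : -1 < α + β) {n k : ℕ} (hkn : k ≤ n) :
    phiCoef α β (n + 1) k =
      (n + β + 1) * (n + 1) / ((k + n + α + β + 2) * (n + 1 - k)) * phiCoef α β n k := by
  have := n.cast_nonneg (α := ℝ)
  have := k.cast_nonneg (α := ℝ)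
  have hkn' : (k : ℝ) ≤ n := mod_cast hkn
  have h₁ : 0 < (n : ℝ) + β + 1 := by linarith
  have h₂ : 0 < (k : ℝ) + n + α + β + 2 := by linarith
  have := (Gamma_pos_of_pos h₁).ne'
  have := (Gamma_pos_of_pos h₂).ne'
  have := (Gamma_pos_of_pos (s := k + β + 1) (by linarith)).ne'
  have : (n - k + 1 : ℝ) ≠ 0 := by linarith
  have : (n + 1 - k : ℝ) ≠ 0 := by linarith
  unfold phiCoef
  rw [show ((n + 1 : ℕ) : ℝ) + β + 1 = n + β + 1 + 1 by push_cast; ring, Gamma_add_one h₁.ne',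
    show (k : ℝ) + ((n + 1 : ℕ) : ℝ) + α + β + 2 = k + n + α + β + 2 + 1 by push_cast; ring,
    Gamma_add_one h₂.ne', factorial_succ, show n + 1 - k = n - k + 1 by omega, factorial_succ]
  push_cast [Nat.cast_sub hkn]
  field_simp
  ring

theorem phiCoef_succ_right (hβ : -1 < β) (hαβ : -1 < α + β) {n k : ℕ} (hkn : k < n) :
    phiCoef α β n (k + 1) =
      (2 * k + α + β + 3) * (k + α + β + 1) * (n - k) /
        ((2 * k + α + β + 1) * (k + n + α + β + 2) * (k + β + 1)) * phiCoef α β n k := by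
  have := n.cast_nonneg (α := ℝ)
  have := k.cast_nonneg (α := ℝ)
  have h₁ : 0 < (k : ℝ) + α + β + 1 := by linarith
  have h₂ : 0 < (k : ℝ) + n + α + β + 2 := by linarith
  have h₃ : 0 < (k : ℝ) + β + 1 := by linarith
  have : 0 < 2 * (k : ℝ) + α + β + 1 := by linarith
  have := (Gamma_pos_of_pos h₁).ne'
  have := (Gamma_pos_of_pos h₂).ne'
  have := (Gamma_pos_of_pos h₃).ne'
  have := (Gamma_pos_of_pos (s := n + β + 1) (by linarith)).ne'
  have : (n - (k + 1) + 1 : ℝ) ≠ 0 := by have : (k : ℝ) < n := mod_cast hkn; linarith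
  unfold phiCoef
  rw [show ((k + 1 : ℕ) : ℝ) + α + β + 1 = k + α + β + 1 + 1 by push_cast; ring,
    Gamma_add_one h₁.ne',
    show ((k + 1 : ℕ) : ℝ) + n + α + β + 2 = k + n + α + β + 2 + 1 by push_cast; ring,
    Gamma_add_one h₂.ne',
    show ((k + 1 : ℕ) : ℝ) + β + 1 = k + β + 1 + 1 by push_cast; ring, Gamma_add_one h₃.ne',
    show n - k = n - (k + 1) + 1 by omega, factorial_succ (n - (k + 1))]
  push_cast [Nat.cast_sub hkn]
  field_simp
  ring

theorem jacobiCoeff_succ_left (hα : -1 < α) (hαβ : -1 < α + β) {j k : ℕ} (hjk : j ≤ k) :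
    jacobiCoeff α β (k + 1) j =
      (α + k + 1) * (α + β + k + j + 1) / ((α + β + k + 1) * (k + 1 - j)) *
        jacobiCoeff α β k j := by
  have := j.cast_nonneg (α := ℝ)
  have := k.cast_nonneg (α := ℝ)
  have hjk' : (j : ℝ) ≤ k := mod_cast hjk
  have h₁ : 0 < α + k + 1 := by linarith
  have h₂ : 0 < α + β + k + j + 1 := by linarith
  have h₃ : 0 < α + β + k + 1 := by linarith
  have := (Gamma_pos_of_pos h₁).ne'
  have := (Gamma_pos_of_pos h₂).ne'
  have := (Gamma_pos_of_pos h₃).ne'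
  have := (Gamma_pos_of_pos (s := α + j + 1) (by linarith)).ne'
  have : (k - j + 1 : ℝ) ≠ 0 := by linarith
  have : (k + 1 - j : ℝ) ≠ 0 := by linarith
  rw [jacobiCoeff_eq_Gamma hα hαβ hjk, jacobiCoeff_eq_Gamma hα hαβ (by omega),
    show α + ((k + 1 : ℕ) : ℝ) + 1 = α + k + 1 + 1 by push_cast; ring, Gamma_add_one h₁.ne',
    show α + β + ((k + 1 : ℕ) : ℝ) + j + 1 = α + β + k + j + 1 + 1 by push_cast; ring,
    Gamma_add_one h₂.ne',
    show α + β + ((k + 1 : ℕ) : ℝ) + 1 = α + β + k + 1 + 1 by push_cast; ring,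
    Gamma_add_one h₃.ne', show k + 1 - j = k - j + 1 by omega, factorial_succ (k - j)]
  push_cast [Nat.cast_sub hjk]
  field_simp
  ring

theorem phiCoef_mul_jacobiCoeff_self (hα : -1 < α) (hβ : -1 < β) (hαβ : -1 < α + β) (j : ℕ) :
    phiCoef α β j j * jacobiCoeff α β j j = 1 := by
  have := j.cast_nonneg (α := ℝ)
  have h₁ : 0 < (j : ℝ) + j + α + β + 1 := by linarith
  have := (Gamma_pos_of_pos h₁).ne'
  have := (Gamma_pos_of_pos (s := j + α + β + 1) (by linarith)).ne'
  have := (Gamma_pos_of_pos (s := j + β + 1) (by linarith)).ne'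
  have := (Gamma_pos_of_pos (s := α + j + 1) (by linarith)).ne'
  have := h₁.ne'
  rw [phiCoef, jacobiCoeff_eq_Gamma hα hαβ le_rfl, Nat.sub_self, factorial_zero, cast_one,
    show 2 * (j : ℝ) + α + β + 1 = j + j + α + β + 1 by ring,
    show (j : ℝ) + j + α + β + 2 = j + j + α + β + 1 + 1 by ring, Gamma_add_one h₁.ne',
    show α + β + j + j + 1 = j + j + α + β + 1 by ring,
    show α + β + j + 1 = j + α + β + 1 by ring]
  generalize (j : ℝ) + j + α + β + 1 = s at *
  field_simp

-- A multiple of `F(n + 1, k)` rather than of `F(n, k)`, so that it is meaningful at `k = n + 1`.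
noncomputable def askeyCertificate (α β : ℝ) (j n k : ℕ) : ℝ :=
  -(((k : ℝ) - j) / (n + 1) * ((k + β) / (n + β + 1)) *
      ((k + n + α + β + 2) / (2 * k + α + β + 1))) *
    (phiCoef α β (n + 1) k * jacobiCoeff α β k j)

theorem askeyCertificate_self (α β : ℝ) (j n : ℕ) : askeyCertificate α β j n j = 0 := by
  simp [askeyCertificate]

theorem askeyCertificate_succ (hα : -1 < α) (hβ : -1 < β) (hαβ : -1 < α + β) {j k n : ℕ}
    (hjk : j ≤ k) (hkn : k ≤ n) :
    askeyCertificate α β j n (k + 1) =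
      -((k + j + α + β + 1) * (k + α + 1) / ((2 * k + α + β + 1) * (k + n + α + β + 2))) *
        (phiCoef α β n k * jacobiCoeff α β k j) := by
  have : (j : ℝ) ≤ k := mod_cast hjk
  have : (k : ℝ) ≤ n := mod_cast hkn
  have := j.cast_nonneg (α := ℝ)
  unfold askeyCertificate
  rw [phiCoef_succ_right hβ hαβ (by omega : k < n + 1), jacobiCoeff_succ_left hα hαβ hjk,
    phiCoef_succ_left hβ hαβ hkn]
  push_cast
  field_simp (discharger := first | exact ne_of_gt (by linarith) | linarith)
  ring

theorem askey_wz_step (hα : -1 < α) (hβ : -1 < β) (hαβ : -1 < α + β) {j k n : ℕ}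
    (hjk : j ≤ k) (hkn : k ≤ n) :
    (n + 1 - j) / (n + 1) * (phiCoef α β (n + 1) k * jacobiCoeff α β k j) =
      phiCoef α β n k * jacobiCoeff α β k j +
        (askeyCertificate α β j n (k + 1) - askeyCertificate α β j n k) := by
  have : (j : ℝ) ≤ k := mod_cast hjk
  have : (k : ℝ) ≤ n := mod_cast hkn
  have := j.cast_nonneg (α := ℝ)
  rw [askeyCertificate_succ hα hβ hαβ hjk hkn, askeyCertificate, phiCoef_succ_left hβ hαβ hkn]
  field_simp (discharger := first | exact ne_of_gt (by linarith) | linarith)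
  ring

theorem askey_wz_top (hβ : -1 < β) (hαβ : -1 < α + β) (j n : ℕ) :
    (n + 1 - j) / (n + 1) * (phiCoef α β (n + 1) (n + 1) * jacobiCoeff α β (n + 1) j) =
      -askeyCertificate α β j n (n + 1) := by
  have := n.cast_nonneg (α := ℝ)
  unfold askeyCertificate
  push_cast
  field_simp (discharger := first | exact ne_of_gt (by linarith) | linarith)
  ring

theorem sum_phiCoef_mul_jacobiCoeff (hα : -1 < α) (hβ : -1 < β) (hαβ : -1 < α + β) {j n : ℕ}
    (hjn : j ≤ n) :
    ∑ k ∈ Icc j n, phiCoef α β n k * jacobiCoeff α β k j = n.choose j := by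
  induction n, hjn using Nat.le_induction with
  | base => simp [phiCoef_mul_jacobiCoeff_self hα hβ hαβ]
  | succ n hjn ih =>
    have hj : (j : ℝ) ≤ n := mod_cast hjn
    have hchoose : (n.choose j : ℝ) * (n + 1) = (n + 1).choose j * (n + 1 - j) := by
      rw [← Nat.cast_succ, ← Nat.cast_sub (by omega), ← Nat.cast_mul, ← Nat.cast_mul,
        Nat.choose_mul_succ_eq]
    have hc : (n + 1 - j : ℝ) / (n + 1) ≠ 0 := div_ne_zero (by linarith) (by positivity)
    refine mul_left_cancel₀ hc ?_
    rw [mul_sum_Icc_succ_of_telescoping hjn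
      (fun k hk => askey_wz_step hα hβ hαβ (mem_Icc.mp hk).1 (mem_Icc.mp hk).2)
      (askey_wz_top hβ hαβ j n) (askeyCertificate_self α β j n), ih]
    field_simp
    linear_combination hchoose

end

/-- Lemma 1(i) (Askey): expansion of ((1+x)/2)^n in Jacobi polynomials with
positive coefficients. -/
theorem stmt13 (α β : ℝ) (hα : -1 < α) (hβ : -1 < β) (hab : -1 < α + β)
    (n : ℕ) (x : ℝ) :
    (((1 + x) / 2) ^ n = ∑ k ∈ Finset.range (n + 1), phiCoef α β n k * jacobiP α β k x)
    ∧ ∀ k ∈ Finset.range (n + 1), 0 < phiCoef α β n k := by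
  refine ⟨?_, fun k _ => phiCoef_pos hβ hab n k⟩
  set y := (x - 1) / 2
  calc ((1 + x) / 2) ^ n = (y + 1) ^ n := by ring
    _ = ∑ j ∈ range (n + 1), ∑ k ∈ Icc j n, phiCoef α β n k * jacobiCoeff α β k j * y ^ j := by
      rw [add_pow]
      refine sum_congr rfl fun j hj => ?_
      rw [← sum_mul, sum_phiCoef_mul_jacobiCoeff hα hβ hab (mem_range_succ_iff.mp hj)]
      ring
    _ = ∑ k ∈ range (n + 1), ∑ j ∈ range (k + 1), phiCoef α β n k * jacobiCoeff α β k j * y ^ j :=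
      sum_comm' fun j k => by simp only [mem_range, mem_Icc]; omega
    _ = ∑ k ∈ range (n + 1), phiCoef α β n k * jacobiP α β k x := by
      simp_rw [jacobiP_eq_sum_jacobiCoeff, mul_sum, mul_assoc]
      rfl
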